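/- arXiv:1510.04591 — 7 statements merged into one kernel-verified Lean document; each statement's English description precedes it below -/
import Mathlib

section
/- Let N be a positive integer, let D = diag(d_1, …, d_N) be a real diagonal N×N matrix with d_1 < d_2 < ⋯ < d_N, let u ∈ ℝ^N have u_j ≠ 0 for every j, let ρ > 0, and set M = D + ρ u uᵀ. Then M has N distinct real eigenvalues λ_1 < λ_2 < ⋯ < λ_N, and they strictly interlace the diagonal entries of D: d_1 < λ_1 < d_2 < λ_2 < ⋯ < d_N < λ_N. -/
/-!
Away from the diagonal entries, the eigenvalues of `diagonal d + ρ • vecMulVec u u` are the zeros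
of the secular function `f t = 1 + ρ ∑ j, u j ^ 2 / (d j - t)`: if `f t = 0`, then
`x j = u j / (d j - t)` is an eigenvector for `t`. As `ρ u_j² > 0`, `f` tends to `+∞` to the left
and to `-∞` to the right of each pole `d j`, and to `1` at `+∞`, so the intermediate value theorem
gives a zero in each gap `(d i, d (i + 1))` and one beyond the largest `d i`. These `N` distinct
eigenvalues are all of them, since eigenvectors for distinct eigenvalues are linearly independent.
-/

open Filter Matrix Module Set Topology

theorem Module.End.HasEigenvalue.mem_range_of_card_le {K V ι : Type*} [Field K]
    [AddCommGroup V] [Module K V] [FiniteDimensional K V] [Fintype ι] {f : End K V} {μ : K}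
    (hμ : f.HasEigenvalue μ) {lam : ι → K} (hlam : Function.Injective lam)
    (hcard : finrank K V ≤ Fintype.card ι) (heig : ∀ i, f.HasEigenvalue (lam i)) :
    μ ∈ range lam := by
  by_contra hne
  choose v hv using fun i => (heig i).exists_hasEigenvector
  obtain ⟨w, hw⟩ := hμ.exists_hasEigenvector
  have hinj : Function.Injective fun o : Option ι => o.elim μ lam := by
    rintro (_ | i) (_ | j) hij
    exacts [rfl, (hne ⟨j, hij.symm⟩).elim, (hne ⟨i, hij⟩).elim, congrArg some (hlam hij)]
  have hli := f.eigenvectors_linearIndependent' _ hinj (fun o => o.elim w v)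
    (by rintro (_ | i); exacts [hw, hv i])
  have := hli.fintype_card_le_finrank
  rw [Fintype.card_option] at this
  omega

theorem Matrix.diagonal_add_smul_vecMulVec_mulVec {ι R : Type*} [Fintype ι] [DecidableEq ι]
    [CommRing R] (d u x : ι → R) (ρ : R) :
    (diagonal d + ρ • vecMulVec u u) *ᵥ x = d * x + (ρ * (u ⬝ᵥ x)) • u := by
  ext j
  simp only [add_mulVec, smul_mulVec, vecMulVec_mulVec, mulVec_diagonal, Pi.add_apply,
    Pi.mul_apply, Pi.smul_apply, smul_eq_mul, MulOpposite.smul_eq_mul_unop, MulOpposite.unop_op]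
  ring

section Secular

variable {ι : Type*} [Fintype ι]

noncomputable def secular {𝕜 : Type*} [Field 𝕜] (d u : ι → 𝕜) (ρ t : 𝕜) : 𝕜 :=
  1 + ρ * ∑ j, u j ^ 2 / (d j - t)

theorem hasEigenvector_of_secular_eq_zero {𝕜 : Type*} [Field 𝕜] [DecidableEq ι] {d u : ι → 𝕜}
    {ρ t : 𝕜} (hdt : ∀ j, d j ≠ t) (ht : secular d u ρ t = 0) :
    End.HasEigenvector (toLin' (diagonal d + ρ • vecMulVec u u)) t fun j => u j / (d j - t) := by
  set x : ι → 𝕜 := fun j => u j / (d j - t)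
  have hsec : secular d u ρ t = 1 + ρ * (u ⬝ᵥ x) := by
    simp only [secular, dotProduct, x, sq, mul_div_assoc]
  refine End.hasEigenvector_iff.2 ⟨End.mem_eigenspace_iff.2 ?_, fun hx => ?_⟩
  · have hρ : ρ * (u ⬝ᵥ x) = -1 := by linear_combination ht - hsec
    ext j
    have := sub_ne_zero.2 (hdt j)
    simp only [toLin'_apply, diagonal_add_smul_vecMulVec_mulVec, hρ, Pi.add_apply, Pi.mul_apply,
      Pi.smul_apply, smul_eq_mul, x]
    field_simp
    ring
  · simp [hsec, hx] at ht

variable {d u : ι → ℝ} {ρ : ℝ}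

theorem continuousOn_secular : ContinuousOn (secular d u ρ) (range d)ᶜ := by
  intro t ht
  refine ContinuousAt.continuousWithinAt ?_
  have hdt : ∀ j, d j - t ≠ 0 := fun j h => ht ⟨j, sub_eq_zero.1 h⟩
  unfold secular
  fun_prop (disch := exact hdt _)

theorem secular_eq_add_pole [DecidableEq ι] (k : ι) (t : ℝ) :
    secular d u ρ t =
      (1 + ρ * ∑ j ∈ Finset.univ.erase k, u j ^ 2 / (d j - t)) + ρ * u k ^ 2 * (d k - t)⁻¹ := by
  rw [secular, ← Finset.add_sum_erase _ _ (Finset.mem_univ k)]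
  ring

theorem continuousAt_secular_erase [DecidableEq ι] (hd : Function.Injective d) (k : ι) :
    ContinuousAt (fun t => 1 + ρ * ∑ j ∈ Finset.univ.erase k, u j ^ 2 / (d j - t)) (d k) := by
  have hdk : ∀ j ∈ Finset.univ.erase k, d j - d k ≠ 0 := fun j hj =>
    sub_ne_zero.2 (hd.ne (Finset.ne_of_mem_erase hj))
  exact continuousAt_const.add <| continuousAt_const.mul <| tendsto_finsetSum _ fun j hj =>
    continuousAt_const.div (continuousAt_const.sub continuousAt_id) (hdk j hj)

theorem tendsto_secular_nhdsGT (hd : Function.Injective d) {k : ι} (hk : u k ≠ 0) (hρ : 0 < ρ) :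
    Tendsto (secular d u ρ) (𝓝[>] d k) atBot := by
  have hpole : Tendsto (fun t => (d k - t)⁻¹) (𝓝[>] d k) atBot := by
    have hsub : Tendsto (d k - ·) (𝓝[>] d k) (𝓝[<] 0) := by
      have := (map_subLeft_nhdsGT (c := d k) (a := d k)).le
      rwa [sub_self] at this
    exact tendsto_inv_nhdsLT_zero.comp hsub
  classical
  rw [funext (secular_eq_add_pole k)]
  exact ((continuousAt_secular_erase hd k).tendsto.mono_left nhdsWithin_le_nhds).add_atBot
    (hpole.const_mul_atBot (by positivity))

theorem tendsto_secular_nhdsLT (hd : Function.Injective d) {k : ι} (hk : u k ≠ 0) (hρ : 0 < ρ) :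
    Tendsto (secular d u ρ) (𝓝[<] d k) atTop := by
  have hpole : Tendsto (fun t => (d k - t)⁻¹) (𝓝[<] d k) atTop := by
    have hsub : Tendsto (d k - ·) (𝓝[<] d k) (𝓝[>] 0) := by
      have := (map_subLeft_nhdsLT (c := d k) (a := d k)).le
      rwa [sub_self] at this
    exact tendsto_inv_nhdsGT_zero.comp hsub
  classical
  rw [funext (secular_eq_add_pole k)]
  exact ((continuousAt_secular_erase hd k).tendsto.mono_left nhdsWithin_le_nhds).add_atTop
    (hpole.const_mul_atTop (by positivity))

theorem tendsto_secular_atTop : Tendsto (secular d u ρ) atTop (𝓝 1) := by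
  have hden : ∀ j, Tendsto (fun t => d j - t) atTop atBot := fun j => by
    simpa [sub_eq_add_neg] using tendsto_atBot_add_const_left _ (d j) tendsto_neg_atTop_atBot
  unfold secular
  simpa using ((tendsto_finsetSum _ fun j _ =>
    (tendsto_const_nhds (x := u j ^ 2)).div_atBot (hden j)).const_mul ρ).const_add 1

theorem exists_secular_eq_zero_mem_Ioo (hd : Function.Injective d) {k l : ι} (hk : u k ≠ 0)
    (hl : u l ≠ 0) (hρ : 0 < ρ) (hkl : d k < d l) (hgap : ∀ j, d j ∉ Ioo (d k) (d l)) :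
    ∃ t ∈ Ioo (d k) (d l), secular d u ρ t = 0 := by
  have := left_nhdsWithin_Ioo_neBot hkl
  have := right_nhdsWithin_Ioo_neBot hkl
  have hcont : ContinuousOn (secular d u ρ) (Ioo (d k) (d l)) :=
    continuousOn_secular.mono fun t ht ⟨j, hj⟩ => hgap j (hj ▸ ht)
  exact isPreconnected_Ioo.intermediate_value_Iii (le_principal_iff.2 self_mem_nhdsWithin)
    (le_principal_iff.2 self_mem_nhdsWithin) hcont
    ((tendsto_secular_nhdsGT hd hk hρ).mono_left (nhdsWithin_mono _ Ioo_subset_Ioi_self))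
    ((tendsto_secular_nhdsLT hd hl hρ).mono_left (nhdsWithin_mono _ Ioo_subset_Iio_self))
    (mem_univ 0)

theorem exists_secular_eq_zero_mem_Ioi (hd : Function.Injective d) {k : ι} (hk : u k ≠ 0)
    (hρ : 0 < ρ) (hmax : ∀ j, d j ≤ d k) : ∃ t ∈ Ioi (d k), secular d u ρ t = 0 := by
  have hcont : ContinuousOn (secular d u ρ) (Ioi (d k)) :=
    continuousOn_secular.mono fun t ht ⟨j, hj⟩ => (hmax j).not_gt (hj ▸ ht)
  exact isPreconnected_Ioi.intermediate_value_Iio (le_principal_iff.2 self_mem_nhdsWithin)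
    (le_principal_iff.2 (Ioi_mem_atTop _)) hcont (tendsto_secular_nhdsGT hd hk hρ)
    tendsto_secular_atTop (show (0 : ℝ) < 1 from one_pos)

end Secular

theorem exists_secular_eq_zero_between {N : ℕ} {d u : Fin N → ℝ} {ρ : ℝ} (hd : StrictMono d)
    (hu : ∀ j, u j ≠ 0) (hρ : 0 < ρ) (i : Fin N) :
    ∃ t, d i < t ∧ (∀ j, i < j → t < d j) ∧ secular d u ρ t = 0 := by
  by_cases hi : i.val + 1 < N
  · set l : Fin N := ⟨i.val + 1, hi⟩
    have hsucc : ∀ j, i < j ↔ l ≤ j := fun j => by simp only [Fin.lt_def, Fin.le_def, l]; omega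
    have hgap : ∀ j, d j ∉ Ioo (d i) (d l) := fun j ⟨hij, hjl⟩ =>
      (hd.lt_iff_lt.1 hjl).not_ge ((hsucc j).1 (hd.lt_iff_lt.1 hij))
    obtain ⟨t, ⟨hit, htl⟩, ht⟩ := exists_secular_eq_zero_mem_Ioo hd.injective (hu i) (hu l) hρ
      (hd ((hsucc l).2 le_rfl)) hgap
    exact ⟨t, hit, fun j hij => htl.trans_le (hd.monotone ((hsucc j).1 hij)), ht⟩
  · have hlast : ∀ j, j ≤ i := fun j => by rw [Fin.le_def]; omega
    obtain ⟨t, hit, ht⟩ := exists_secular_eq_zero_mem_Ioi hd.injective (hu i) hρ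
      fun j => hd.monotone (hlast j)
    exact ⟨t, hit, fun j hij => absurd (hlast j) hij.not_ge, ht⟩

theorem stmt0_general (N : ℕ) (d : Fin N → ℝ) (hd : StrictMono d)
    (u : Fin N → ℝ) (hu : ∀ j, u j ≠ 0) (ρ : ℝ) (hρ : 0 < ρ)
    (M : Matrix (Fin N) (Fin N) ℝ)
    (hM : M = Matrix.diagonal d + ρ • Matrix.vecMulVec u u) :
    ∃ lam : Fin N → ℝ,
      StrictMono lam ∧
      (∀ i, ∃ x : Fin N → ℝ, x ≠ 0 ∧ M.mulVec x = lam i • x) ∧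
      (∀ μ : ℝ, (∃ x : Fin N → ℝ, x ≠ 0 ∧ M.mulVec x = μ • x) → ∃ i, μ = lam i) ∧
      (∀ i, d i < lam i) ∧
      (∀ i : Fin N, ∀ h : i.val + 1 < N, lam i < d ⟨i.val + 1, h⟩) := by
  choose lam hdlam hlamd hsec using exists_secular_eq_zero_between hd hu hρ
  have hmono : StrictMono lam := fun i j hij => (hlamd i j hij).trans (hdlam j)
  have hpole : ∀ i j, d j ≠ lam i := fun i j => by
    rcases le_or_gt j i with hji | hij
    exacts [((hd.monotone hji).trans_lt (hdlam i)).ne, (hlamd i j hij).ne']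
  have hvec := fun i => hasEigenvector_of_secular_eq_zero (hpole i) (hsec i)
  subst hM
  refine ⟨lam, hmono, fun i => ⟨_, (hvec i).2, (hvec i).apply_eq_smul⟩, fun μ ⟨x, hx0, hx⟩ => ?_,
    hdlam, fun i h => hlamd i _ (Fin.lt_def.2 (Nat.lt_succ_self _))⟩
  have hμ : End.HasEigenvalue (toLin' (diagonal d + ρ • vecMulVec u u)) μ :=
    End.hasEigenvalue_of_hasEigenvector (End.hasEigenvector_iff.2 ⟨End.mem_eigenspace_iff.2 hx, hx0⟩)
  obtain ⟨i, hi⟩ := hμ.mem_range_of_card_le hmono.injective (by simp)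
    fun i => End.hasEigenvalue_of_hasEigenvector (hvec i)
  exact ⟨i, hi.symm⟩

/-- Bunch–Nielsen–Sorensen: the eigenvalues of a diagonal plus positive rank-one
matrix are distinct and strictly interlace the diagonal entries. -/
theorem stmt0 (N : ℕ) (hN : 0 < N) (d : Fin N → ℝ) (hd : StrictMono d)
    (u : Fin N → ℝ) (hu : ∀ j, u j ≠ 0) (ρ : ℝ) (hρ : 0 < ρ)
    (M : Matrix (Fin N) (Fin N) ℝ)
    (hM : M = Matrix.diagonal d + ρ • Matrix.vecMulVec u u) :
    ∃ lam : Fin N → ℝ,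
      StrictMono lam ∧
      (∀ i, ∃ x : Fin N → ℝ, x ≠ 0 ∧ M.mulVec x = lam i • x) ∧
      (∀ μ : ℝ, (∃ x : Fin N → ℝ, x ≠ 0 ∧ M.mulVec x = μ • x) → ∃ i, μ = lam i) ∧
      (∀ i, d i < lam i) ∧
      (∀ i : Fin N, ∀ h : i.val + 1 < N, lam i < d ⟨i.val + 1, h⟩) :=
  stmt0_general N d hd u hu ρ hρ M hM
end

section
/- Let N be a positive integer, let D = diag(d_1, …, d_N) be a real diagonal N×N matrix with d_1 < d_2 < ⋯ < d_N, let u ∈ ℝ^N have u_j ≠ 0 for every j, let ρ > 0, and set M = D + ρ u uᵀ. If λ is any eigenvalue of M, then λ ≠ d_j for every j, and the nonzero vector q ∈ ℝ^N with entries q_j = u_j/(d_j − λ) satisfies M q = λ q. -/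
open Matrix

/-! If `x` is an eigenvector of `diagonal d + ρ • uuᵀ` for `λ`, then componentwise
`(d i - λ) x i = -ρ (u ⬝ᵥ x) u i`. The scalar `u ⬝ᵥ x` cannot vanish: otherwise `x` would be an
eigenvector of `diagonal d` with distinct diagonal entries, hence supported on a single `i`, and
then `u ⬝ᵥ x = u i * x i ≠ 0`. So the right-hand side never vanishes, which forces `λ ≠ d i`,
and `x` is the nonzero multiple `-ρ (u ⬝ᵥ x)` of `q = (u j / (d j - λ))ⱼ`; hence so is `q` of `x`. -/

namespace Matrix

variable {K n : Type*} [Field K] [Fintype n] [DecidableEq n]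
  {d u x : n → K} {ρ lam : K}

theorem diagonal_add_smul_vecMulVec_mulVec_apply (d u x : n → K) (ρ : K) (i : n) :
    ((diagonal d + ρ • vecMulVec u u) *ᵥ x) i = d i * x i + ρ * (u ⬝ᵥ x) * u i := by
  simp only [add_mulVec, smul_mulVec, vecMulVec_mulVec, Pi.add_apply, mulVec_diagonal,
    Pi.smul_apply, smul_eq_mul, MulOpposite.smul_eq_mul_unop, MulOpposite.unop_op]
  ring

theorem sub_mul_eq_of_diagonal_add_smul_vecMulVec_mulVec_eq
    (hx : (diagonal d + ρ • vecMulVec u u) *ᵥ x = lam • x) (i : n) :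
    (d i - lam) * x i = -(ρ * (u ⬝ᵥ x) * u i) := by
  have hi := congrFun hx i
  rw [diagonal_add_smul_vecMulVec_mulVec_apply, Pi.smul_apply, smul_eq_mul] at hi
  linear_combination hi

theorem dotProduct_ne_zero_of_diagonal_add_smul_vecMulVec_mulVec_eq
    (hd : Function.Injective d) (hu : ∀ j, u j ≠ 0) (hx0 : x ≠ 0)
    (hx : (diagonal d + ρ • vecMulVec u u) *ᵥ x = lam • x) :
    u ⬝ᵥ x ≠ 0 := by
  intro hc
  have hker (j : n) : (d j - lam) * x j = 0 := by
    simpa [hc] using sub_mul_eq_of_diagonal_add_smul_vecMulVec_mulVec_eq hx j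
  obtain ⟨i, hi⟩ := Function.ne_iff.mp hx0
  have hdi : d i = lam := sub_eq_zero.mp ((mul_eq_zero.mp (hker i)).resolve_right hi)
  have hsupp (j : n) (hj : j ≠ i) : x j = 0 :=
    (mul_eq_zero.mp (hker j)).resolve_left (sub_ne_zero.mpr (hdi ▸ hd.ne hj))
  have hsingle : u ⬝ᵥ x = u i * x i :=
    Finset.sum_eq_single_of_mem i (Finset.mem_univ i) fun j _ hj => by simp [hsupp j hj]
  exact mul_ne_zero (hu i) hi (hsingle ▸ hc)

theorem sub_ne_zero_of_diagonal_add_smul_vecMulVec_mulVec_eq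
    (hd : Function.Injective d) (hu : ∀ j, u j ≠ 0) (hρ : ρ ≠ 0) (hx0 : x ≠ 0)
    (hx : (diagonal d + ρ • vecMulVec u u) *ᵥ x = lam • x) (j : n) :
    d j - lam ≠ 0 := by
  intro hj
  have h := sub_mul_eq_of_diagonal_add_smul_vecMulVec_mulVec_eq hx j
  rw [hj, zero_mul, eq_comm, neg_eq_zero] at h
  exact mul_ne_zero (mul_ne_zero hρ
    (dotProduct_ne_zero_of_diagonal_add_smul_vecMulVec_mulVec_eq hd hu hx0 hx)) (hu j) h

theorem eq_smul_of_diagonal_add_smul_vecMulVec_mulVec_eq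
    (hd : Function.Injective d) (hu : ∀ j, u j ≠ 0) (hρ : ρ ≠ 0) (hx0 : x ≠ 0)
    (hx : (diagonal d + ρ • vecMulVec u u) *ᵥ x = lam • x) :
    x = (-(ρ * (u ⬝ᵥ x))) • fun j => u j / (d j - lam) := by
  ext j
  rw [Pi.smul_apply, smul_eq_mul, eq_comm, ← mul_div_assoc,
    div_eq_iff (sub_ne_zero_of_diagonal_add_smul_vecMulVec_mulVec_eq hd hu hρ hx0 hx j)]
  linear_combination -sub_mul_eq_of_diagonal_add_smul_vecMulVec_mulVec_eq hx j

end Matrix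

theorem stmt1_general (N : ℕ) (d : Fin N → ℝ) (hd : StrictMono d)
    (u : Fin N → ℝ) (hu : ∀ j, u j ≠ 0) (ρ : ℝ) (hρ : 0 < ρ)
    (M : Matrix (Fin N) (Fin N) ℝ)
    (hM : M = Matrix.diagonal d + ρ • Matrix.vecMulVec u u)
    (lam : ℝ) (hlam : ∃ x : Fin N → ℝ, x ≠ 0 ∧ M.mulVec x = lam • x) :
    (∀ j, lam ≠ d j) ∧
    (fun j => u j / (d j - lam)) ≠ (0 : Fin N → ℝ) ∧
    M.mulVec (fun j => u j / (d j - lam)) = lam • (fun j => u j / (d j - lam)) := by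
  obtain ⟨x, hx0, hx⟩ := hlam
  subst hM
  have hsub := sub_ne_zero_of_diagonal_add_smul_vecMulVec_mulVec_eq hd.injective hu hρ.ne' hx0 hx
  have hxq := eq_smul_of_diagonal_add_smul_vecMulVec_mulVec_eq hd.injective hu hρ.ne' hx0 hx
  set q : Fin N → ℝ := fun j => u j / (d j - lam)
  set a : ℝ := -(ρ * (u ⬝ᵥ x))
  have ha : a ≠ 0 := neg_ne_zero.mpr (mul_ne_zero hρ.ne'
    (dotProduct_ne_zero_of_diagonal_add_smul_vecMulVec_mulVec_eq hd.injective hu hx0 hx))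
  have hqx : q = a⁻¹ • x := by rw [hxq, smul_smul, inv_mul_cancel₀ ha, one_smul]
  refine ⟨fun j hj => hsub j (sub_eq_zero.mpr hj.symm), fun hq => hx0 ?_, ?_⟩
  · rw [hxq, hq, smul_zero]
  · rw [hqx, mulVec_smul, hx, smul_comm]

/-- An eigenvalue of `D + ρ u uᵀ` differs from all diagonal entries `d j`, and the
vector with entries `u j / (d j - λ)` is a corresponding (nonzero) eigenvector. -/
theorem stmt1 (N : ℕ) (hN : 0 < N) (d : Fin N → ℝ) (hd : StrictMono d)
    (u : Fin N → ℝ) (hu : ∀ j, u j ≠ 0) (ρ : ℝ) (hρ : 0 < ρ)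
    (M : Matrix (Fin N) (Fin N) ℝ)
    (hM : M = Matrix.diagonal d + ρ • Matrix.vecMulVec u u)
    (lam : ℝ) (hlam : ∃ x : Fin N → ℝ, x ≠ 0 ∧ M.mulVec x = lam • x) :
    (∀ j, lam ≠ d j) ∧
    (fun j => u j / (d j - lam)) ≠ (0 : Fin N → ℝ) ∧
    M.mulVec (fun j => u j / (d j - lam)) = lam • (fun j => u j / (d j - lam)) :=
  stmt1_general N d hd u hu ρ hρ M hM lam hlam
end

section
/- Let N be a positive integer, let D = diag(d_1, …, d_N) be a real diagonal N×N matrix with d_1 < d_2 < ⋯ < d_N, let u ∈ ℝ^N have u_j ≠ 0 for every j, let ρ > 0, and set M = D + ρ u uᵀ. Let λ_1 < ⋯ < λ_N be the eigenvalues of M (none of which equals any d_i), define v_j = 1/√(∑_{k=1}^N u_k²/(d_k − λ_j)²), and let Q be the N×N matrix with entries Q_{ij} = u_i v_j/(d_i − λ_j). Then Q is an orthogonal matrix (Qᵀ Q = I) and M Q = Q Λ, where Λ = diag(λ_1, …, λ_N); equivalently M = Q Λ Qᵀ. -/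
open Matrix BigOperators

/-!
Write `w(μ) = (D - μ)⁻¹ u`. Then `(D + ρ u uᵀ) w(μ) = μ w(μ) + (1 + ρ uᵀ w(μ)) u`, and an eigenvector
of `M` for an eigenvalue `μ` that is not a pole must be a multiple of `w(μ)`; hence every
eigenvalue `λ_j` solves the secular equation `1 + ρ uᵀ w(λ_j) = 0` and `w(λ_j)` is an eigenvector.
The partial fraction identity `w(μ)ᵀ w(ν) = (uᵀ w(μ) - uᵀ w(ν)) / (μ - ν)` makes the `w(λ_j)`
pairwise orthogonal, and `v_j` normalizes them, so `Q` is orthogonal.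
-/

section RankOneUpdate

variable {ι : Type*} [Fintype ι] {d u : ι → ℝ} {μ ν ρ : ℝ}

variable (d u) in
noncomputable def resolventVec (μ : ℝ) : ι → ℝ := fun i => u i / (d i - μ)

lemma resolventVec_dotProduct_self (μ : ℝ) :
    resolventVec d u μ ⬝ᵥ resolventVec d u μ = ∑ k, u k ^ 2 / (d k - μ) ^ 2 := by
  simp only [dotProduct, resolventVec, div_mul_div_comm, sq]

lemma resolventVec_dotProduct_resolventVec (hμ : ∀ i, d i ≠ μ) (hν : ∀ i, d i ≠ ν)
    (hμν : μ ≠ ν) :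
    resolventVec d u μ ⬝ᵥ resolventVec d u ν
      = (u ⬝ᵥ resolventVec d u μ - u ⬝ᵥ resolventVec d u ν) / (μ - ν) := by
  simp only [dotProduct, ← Finset.sum_sub_distrib, Finset.sum_div]
  refine Finset.sum_congr rfl fun i _ => ?_
  have := sub_ne_zero.2 (hμ i)
  have := sub_ne_zero.2 (hν i)
  have := sub_ne_zero.2 hμν
  simp only [resolventVec]
  field_simp
  ring

lemma resolventVec_dotProduct_resolventVec_eq_zero (hμ : ∀ i, d i ≠ μ) (hν : ∀ i, d i ≠ ν)
    (hμν : μ ≠ ν) (hsecμ : ρ * (u ⬝ᵥ resolventVec d u μ) = -1)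
    (hsecν : ρ * (u ⬝ᵥ resolventVec d u ν) = -1) :
    resolventVec d u μ ⬝ᵥ resolventVec d u ν = 0 := by
  have hρ : ρ ≠ 0 := left_ne_zero_of_mul (by rw [hsecμ]; norm_num)
  rw [resolventVec_dotProduct_resolventVec hμ hν hμν,
    mul_left_cancel₀ hρ (hsecμ.trans hsecν.symm), sub_self, zero_div]

lemma resolventVec_dotProduct_self_pos (hsec : ρ * (u ⬝ᵥ resolventVec d u μ) = -1) :
    0 < resolventVec d u μ ⬝ᵥ resolventVec d u μ := by
  have hw : resolventVec d u μ ≠ 0 := fun h0 => by simp [h0] at hsec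
  exact (Finset.sum_nonneg fun i _ => mul_self_nonneg _).lt_of_ne'
    (dotProduct_self_eq_zero.not.2 hw)

variable [DecidableEq ι]

lemma diagonal_add_smul_vecMulVec_mulVec_resolventVec (hμ : ∀ i, d i ≠ μ) :
    (diagonal d + ρ • vecMulVec u u) *ᵥ resolventVec d u μ
      = μ • resolventVec d u μ + (1 + ρ * (u ⬝ᵥ resolventVec d u μ)) • u := by
  ext i
  have := sub_ne_zero.2 (hμ i)
  simp only [add_mulVec, smul_mulVec, mulVec_diagonal, vecMulVec_mulVec, Pi.add_apply,
    Pi.smul_apply, smul_eq_mul, op_smul_eq_smul, resolventVec]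
  field_simp
  ring

lemma diagonal_add_smul_vecMulVec_mulVec_resolventVec_of_secular (hμ : ∀ i, d i ≠ μ)
    (hsec : ρ * (u ⬝ᵥ resolventVec d u μ) = -1) :
    (diagonal d + ρ • vecMulVec u u) *ᵥ resolventVec d u μ = μ • resolventVec d u μ := by
  rw [diagonal_add_smul_vecMulVec_mulVec_resolventVec hμ, hsec, add_neg_cancel, zero_smul,
    add_zero]

lemma secular_of_diagonal_add_smul_vecMulVec_mulVec_eq_smul {x : ι → ℝ} (hμ : ∀ i, d i ≠ μ)
    (hx : x ≠ 0) (h : (diagonal d + ρ • vecMulVec u u) *ᵥ x = μ • x) :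
    ρ * (u ⬝ᵥ resolventVec d u μ) = -1 := by
  set c := u ⬝ᵥ x
  have hx_eq : x = (-(ρ * c)) • resolventVec d u μ := by
    ext i
    have hi := congrFun h i
    have := sub_ne_zero.2 (hμ i)
    simp only [add_mulVec, smul_mulVec, mulVec_diagonal, vecMulVec_mulVec, Pi.add_apply,
      Pi.smul_apply, smul_eq_mul, op_smul_eq_smul] at hi
    simp only [resolventVec, Pi.smul_apply, smul_eq_mul]
    field_simp
    linear_combination hi
  have hc : c ≠ 0 := fun hc => hx (by rw [hx_eq, hc]; simp)
  have hc_eq : c = -(ρ * c) * (u ⬝ᵥ resolventVec d u μ) := by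
    rw [← smul_eq_mul, ← dotProduct_smul, ← hx_eq]
  apply mul_left_cancel₀ hc
  linear_combination hc_eq

lemma mul_eq_mul_diagonal_of_mulVec_eq {R : Type*} [CommSemiring R] {M Q : Matrix ι ι R}
    {lam : ι → R} (h : ∀ j, M *ᵥ Qᵀ j = lam j • Qᵀ j) : M * Q = Q * diagonal lam := by
  ext i j
  rw [mul_diagonal, mul_comm]
  exact congrFun (h j) i

end RankOneUpdate

theorem stmt2_general (N : ℕ) (d : Fin N → ℝ)
    (u : Fin N → ℝ) (ρ : ℝ)
    (M : Matrix (Fin N) (Fin N) ℝ)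
    (hM : M = Matrix.diagonal d + ρ • Matrix.vecMulVec u u)
    (lam : Fin N → ℝ) (hmono : StrictMono lam)
    (heig : ∀ j, ∃ x : Fin N → ℝ, x ≠ 0 ∧ M.mulVec x = lam j • x)
    (hne : ∀ i j, lam j ≠ d i)
    (v : Fin N → ℝ)
    (hv : ∀ j, v j = 1 / Real.sqrt (∑ k, u k ^ 2 / (d k - lam j) ^ 2))
    (Q : Matrix (Fin N) (Fin N) ℝ)
    (hQ : ∀ i j, Q i j = u i * v j / (d i - lam j)) :
    Qᵀ * Q = 1 ∧ M * Q = Q * Matrix.diagonal lam ∧ M = Q * Matrix.diagonal lam * Qᵀ := by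
  have hpole : ∀ j i, d i ≠ lam j := fun j i => (hne i j).symm
  have hsec : ∀ j, ρ * (u ⬝ᵥ resolventVec d u (lam j)) = -1 := fun j => by
    obtain ⟨x, hx, hMx⟩ := heig j
    exact secular_of_diagonal_add_smul_vecMulVec_mulVec_eq_smul (hpole j) hx (hM ▸ hMx)
  have hcol : ∀ j, Qᵀ j = v j • resolventVec d u (lam j) := fun j => by
    ext i
    simp only [transpose_apply, hQ, Pi.smul_apply, smul_eq_mul, resolventVec]
    ring
  have hQQ : Qᵀ * Q = 1 := by
    ext j l
    change Qᵀ j ⬝ᵥ Qᵀ l = _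
    rw [hcol, hcol, smul_dotProduct, dotProduct_smul, smul_eq_mul, smul_eq_mul]
    rcases eq_or_ne j l with rfl | hjl
    · have hpos := resolventVec_dotProduct_self_pos (hsec j)
      rw [resolventVec_dotProduct_self] at hpos ⊢
      rw [one_apply_eq, ← mul_assoc, ← sq, hv j, div_pow, one_pow, Real.sq_sqrt hpos.le,
        one_div, inv_mul_cancel₀ hpos.ne']
    · rw [one_apply_ne hjl, resolventVec_dotProduct_resolventVec_eq_zero (hpole j) (hpole l)
        (hmono.injective.ne hjl) (hsec j) (hsec l), mul_zero, mul_zero]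
  have hMQ : M * Q = Q * diagonal lam := mul_eq_mul_diagonal_of_mulVec_eq fun j => by
    rw [hcol, mulVec_smul, hM,
      diagonal_add_smul_vecMulVec_mulVec_resolventVec_of_secular (hpole j) (hsec j), smul_comm]
  refine ⟨hQQ, hMQ, ?_⟩
  rw [← hMQ, mul_assoc, mul_eq_one_comm.mp hQQ, mul_one]

/-- The matrix `Q` with entries `u i * v j / (d i - λ j)`, where `v j` are the
normalization constants, is an orthogonal eigenvector matrix of `M = D + ρ u uᵀ`. -/
theorem stmt2 (N : ℕ) (hN : 0 < N) (d : Fin N → ℝ) (hd : StrictMono d)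
    (u : Fin N → ℝ) (hu : ∀ j, u j ≠ 0) (ρ : ℝ) (hρ : 0 < ρ)
    (M : Matrix (Fin N) (Fin N) ℝ)
    (hM : M = Matrix.diagonal d + ρ • Matrix.vecMulVec u u)
    (lam : Fin N → ℝ) (hmono : StrictMono lam)
    (heig : ∀ j, ∃ x : Fin N → ℝ, x ≠ 0 ∧ M.mulVec x = lam j • x)
    (hall : ∀ μ : ℝ, (∃ x : Fin N → ℝ, x ≠ 0 ∧ M.mulVec x = μ • x) → ∃ j, μ = lam j)
    (hne : ∀ i j, lam j ≠ d i)
    (v : Fin N → ℝ)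
    (hv : ∀ j, v j = 1 / Real.sqrt (∑ k, u k ^ 2 / (d k - lam j) ^ 2))
    (Q : Matrix (Fin N) (Fin N) ℝ)
    (hQ : ∀ i j, Q i j = u i * v j / (d i - lam j)) :
    Qᵀ * Q = 1 ∧ M * Q = Q * Matrix.diagonal lam ∧ M = Q * Matrix.diagonal lam * Qᵀ :=
  stmt2_general N d u ρ M hM lam hmono heig hne v hv Q hQ
end

section
/- Let N be a positive integer, let D = diag(d_1, …, d_N) be a real diagonal N×N matrix with d_1 < d_2 < ⋯ < d_N, let u ∈ ℝ^N have u_j ≠ 0 for every j, let ρ > 0, and set M = D + ρ u uᵀ. For any real λ with λ ≠ d_j for all j, λ is an eigenvalue of M if and only if f(λ) = 0, where f(λ) = 1 + ρ ∑_{j=1}^N u_j²/(d_j − λ) is the secular function. -/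
/-!
Writing `c = vᵀx`, the equation `(D + ρ u vᵀ) x = λ x` says `(D - λ) x = -ρ c u`, i.e.
`x = -ρ c (D - λ)⁻¹ u`. Pairing with `v` gives `c (1 + ρ vᵀ(D - λ)⁻¹ u) = 0`, and `c ≠ 0`
for an eigenvector; conversely, when the secular function vanishes, `(D - λ)⁻¹ u` is an
eigenvector, nonzero because its pairing with `v` is `-1/ρ`.
-/

open Matrix BigOperators

namespace Matrix

variable {K n : Type*} [Field K] [Fintype n] [DecidableEq n]

theorem diagonal_add_smul_vecMulVec_mulVec_s3 (d u v x : n → K) (ρ : K) :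
    (diagonal d + ρ • vecMulVec u v) *ᵥ x = d * x + (ρ * (v ⬝ᵥ x)) • u := by
  ext i
  simp only [add_mulVec, smul_mulVec, vecMulVec_mulVec, Pi.add_apply, Pi.smul_apply,
    mulVec_diagonal, Pi.mul_apply, MulOpposite.smul_eq_mul_unop, MulOpposite.unop_op,
    smul_eq_mul]
  ring

theorem diagonal_add_smul_vecMulVec_mulVec_eq_smul_iff {d : n → K} {μ : K}
    (hμ : ∀ j, d j ≠ μ) (u v x : n → K) (ρ : K) :
    (diagonal d + ρ • vecMulVec u v) *ᵥ x = μ • x ↔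
      x = (-(ρ * (v ⬝ᵥ x))) • fun j => u j / (d j - μ) := by
  rw [diagonal_add_smul_vecMulVec_mulVec_s3, funext_iff, funext_iff]
  refine forall_congr' fun i => ?_
  have hi : d i - μ ≠ 0 := sub_ne_zero.mpr (hμ i)
  simp only [Pi.add_apply, Pi.mul_apply, Pi.smul_apply, smul_eq_mul]
  rw [mul_div_assoc', eq_div_iff hi]
  constructor <;> intro h <;> linear_combination h

theorem exists_diagonal_add_smul_vecMulVec_mulVec_eq_smul_iff {d : n → K} {μ : K}
    (hμ : ∀ j, d j ≠ μ) (u v : n → K) (ρ : K) :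
    (∃ x, x ≠ 0 ∧ (diagonal d + ρ • vecMulVec u v) *ᵥ x = μ • x) ↔
      1 + ρ * (v ⬝ᵥ fun j => u j / (d j - μ)) = 0 := by
  set w : n → K := fun j => u j / (d j - μ)
  simp only [diagonal_add_smul_vecMulVec_mulVec_eq_smul_iff hμ]
  constructor
  · rintro ⟨x, hx, hxw⟩
    have hc : v ⬝ᵥ x ≠ 0 := fun hc => hx (by rw [hxw, hc]; simp)
    have hcw : v ⬝ᵥ x = -(ρ * (v ⬝ᵥ x)) * (v ⬝ᵥ w) := by
      conv_lhs => rw [hxw]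
      rw [dotProduct_smul, smul_eq_mul]
    exact (mul_right_inj' hc).mp (by linear_combination hcw)
  · intro hf
    have hvw : ρ * (v ⬝ᵥ w) = -1 := by linear_combination hf
    refine ⟨w, fun hw => ?_, by rw [hvw, neg_neg, one_smul]⟩
    simp [hw] at hvw

end Matrix

theorem stmt3_general (N : ℕ) (d : Fin N → ℝ)
    (u : Fin N → ℝ) (ρ : ℝ)
    (M : Matrix (Fin N) (Fin N) ℝ)
    (hM : M = Matrix.diagonal d + ρ • Matrix.vecMulVec u u)
    (lam : ℝ) (hne : ∀ j, lam ≠ d j) :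
    (∃ x : Fin N → ℝ, x ≠ 0 ∧ M.mulVec x = lam • x) ↔
      1 + ρ * ∑ j, u j ^ 2 / (d j - lam) = 0 := by
  subst hM
  rw [exists_diagonal_add_smul_vecMulVec_mulVec_eq_smul_iff (fun j => (hne j).symm)]
  simp only [dotProduct, mul_div_assoc', sq]

/-- For `λ` different from all `d j`, `λ` is an eigenvalue of `M = D + ρ u uᵀ`
iff the secular function `f(λ) = 1 + ρ ∑ u_j²/(d_j - λ)` vanishes. -/
theorem stmt3 (N : ℕ) (hN : 0 < N) (d : Fin N → ℝ) (hd : StrictMono d)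
    (u : Fin N → ℝ) (hu : ∀ j, u j ≠ 0) (ρ : ℝ) (hρ : 0 < ρ)
    (M : Matrix (Fin N) (Fin N) ℝ)
    (hM : M = Matrix.diagonal d + ρ • Matrix.vecMulVec u u)
    (lam : ℝ) (hne : ∀ j, lam ≠ d j) :
    (∃ x : Fin N → ℝ, x ≠ 0 ∧ M.mulVec x = lam • x) ↔
      1 + ρ * ∑ j, u j ^ 2 / (d j - lam) = 0 :=
  stmt3_general N d u ρ M hM lam hne
end

section
/- Let N be a positive integer and let d_1, …, d_N and λ̂_1, …, λ̂_N be real numbers satisfying the strict interlacing property d_1 < λ̂_1 < d_2 < λ̂_2 < ⋯ < d_N < λ̂_N. Define û ∈ ℝ^N by û_i = √( (∏_{j=1}^{i−1} (λ̂_j − d_i)/(d_j − d_i)) · (∏_{j=i+1}^{N} (λ̂_j − d_i)/(d_j − d_i)) · (λ̂_i − d_i) ). Then the eigenvalues of the symmetric matrix D + û ûᵀ, where D = diag(d_1, …, d_N), are exactly λ̂_1, …, λ̂_N; equivalently, det(λ I − D − û ûᵀ) = ∏_{i=1}^N (λ − λ̂_i) for all real λ. -/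
open Matrix Polynomial Finset Lagrange

/-!
With `a_i = x - d_i`, the matrix determinant lemma gives
`det (x - D - û ûᵀ) = ∏ (x - d_i) - ∑ û_i² ∏_{j ≠ i} (x - d_j)`,
first away from the poles `x = d_i` and then everywhere by continuity.
The right-hand side is a monic polynomial of degree `N` whose value at the node `d_k`
is `-û_k² ∏_{j ≠ k} (d_k - d_j)`, and `û_k²` is chosen exactly so that this equals
`∏_i (d_k - λ̂_i)`. Two monic polynomials of degree `N` agreeing at `N` distinct nodes
coincide. Interlacing makes every factor of `û_k²` positive, so the square root in the
definition of `û_k` squares back.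
-/

section Interlacing

variable {α : Type*} [Preorder α] {N : ℕ} {d lam : Fin N → α}

theorem lam_lt_of_interlacing (h1 : ∀ i, d i < lam i)
    (h2 : ∀ i : Fin N, ∀ h : i.val + 1 < N, lam i < d ⟨i.val + 1, h⟩) {j k : Fin N}
    (hjk : j < k) : lam j < d k := by
  suffices ∀ n (hn : n < N), j.val < n → lam j < d ⟨n, hn⟩ from this k k.2 hjk
  intro n
  induction n with
  | zero => intro _ h; omega
  | succ n ih =>
    intro hn hjn
    rcases Nat.lt_succ_iff_lt_or_eq.1 hjn with hlt | rfl
    · exact (ih (by omega) hlt).trans ((h1 _).trans (h2 ⟨n, _⟩ hn))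
    · exact h2 j hn

theorem strictMono_of_interlacing (h1 : ∀ i, d i < lam i)
    (h2 : ∀ i : Fin N, ∀ h : i.val + 1 < N, lam i < d ⟨i.val + 1, h⟩) : StrictMono d :=
  fun _ _ hjk => (h1 _).trans (lam_lt_of_interlacing h1 h2 hjk)

end Interlacing

theorem Finset.prod_filter_lt_mul_prod_filter_gt {ι M : Type*} [LinearOrder ι] [Fintype ι]
    [CommMonoid M] (f : ι → M) (k : ι) :
    (∏ j ∈ univ.filter (· < k), f j) * ∏ j ∈ univ.filter (k < ·), f j =
      ∏ j ∈ univ.erase k, f j := by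
  rw [← prod_union (disjoint_filter.2 fun j _ h h' => lt_asymm h h')]
  congr 1
  ext j
  simp [lt_or_lt_iff_ne]

section Weight

variable {K ι : Type*} [Field K] [Fintype ι] [DecidableEq ι]

/-- The square `û_k²` of the paper's update vector. -/
def loewnerWeight (d lam : ι → K) (k : ι) : K :=
  (∏ j ∈ univ.erase k, (lam j - d k) / (d j - d k)) * (lam k - d k)

theorem loewnerWeight_mul_prod_erase {d : ι → K} (hd : Function.Injective d) (lam : ι → K)
    (k : ι) :
    loewnerWeight d lam k * ∏ j ∈ univ.erase k, (d k - d j) = -∏ i, (d k - lam i) := by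
  have hfactor :
      ∀ j ∈ univ.erase k, (lam j - d k) / (d j - d k) * (d k - d j) = d k - lam j := by
    intro j hj
    have : d j - d k ≠ 0 := sub_ne_zero.2 (hd.ne (ne_of_mem_erase hj))
    field_simp
    ring
  rw [loewnerWeight, mul_right_comm, ← prod_mul_distrib, prod_congr rfl hfactor,
    ← mul_prod_erase univ (fun i => d k - lam i) (mem_univ k)]
  ring

theorem nodal_sub_sum_loewnerWeight {d : ι → K} (hd : Function.Injective d) (lam : ι → K) :
    nodal univ d - ∑ i, C (loewnerWeight d lam i) * nodal (univ.erase i) d = nodal univ lam := by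
  refine eq_of_degree_sub_lt_of_eval_index_eq univ hd.injOn ?_ fun k _ => ?_
  · rw [← mem_degreeLT, sub_right_comm]
    refine Submodule.sub_mem _ ?_ (Submodule.sum_mem _ fun i _ => ?_)
    · rw [mem_degreeLT, ← degree_nodal (v := d)]
      exact degree_sub_lt_left (by rw [degree_nodal, degree_nodal]) nodal_ne_zero
        (by rw [nodal_monic.leadingCoeff, nodal_monic.leadingCoeff])
    · rw [← smul_eq_C_mul]
      refine Submodule.smul_mem _ _ (mem_degreeLT.2 ?_)
      rw [degree_nodal]
      exact_mod_cast card_erase_lt_of_mem (mem_univ i)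
  · rw [eval_sub, eval_nodal_at_node (mem_univ k), eval_finsetSum,
      sum_eq_single k (fun i _ hik => by
        rw [eval_mul, eval_nodal_at_node (mem_erase.2 ⟨Ne.symm hik, mem_univ k⟩), mul_zero])
        (by simp),
      eval_mul, eval_C, eval_nodal, eval_nodal, loewnerWeight_mul_prod_erase hd, zero_sub, neg_neg]

end Weight

theorem loewnerWeight_pos {K : Type*} [Field K] [LinearOrder K] [IsStrictOrderedRing K] {N : ℕ}
    {d lam : Fin N → K} (h1 : ∀ i, d i < lam i)
    (h2 : ∀ i : Fin N, ∀ h : i.val + 1 < N, lam i < d ⟨i.val + 1, h⟩) (k : Fin N) :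
    0 < loewnerWeight d lam k := by
  refine mul_pos (prod_pos fun j hj => ?_) (sub_pos.2 (h1 k))
  rcases lt_or_gt_of_ne (ne_of_mem_erase hj) with hjk | hkj
  · exact div_pos_of_neg_of_neg (sub_neg.2 (lam_lt_of_interlacing h1 h2 hjk))
      (sub_neg.2 (strictMono_of_interlacing h1 h2 hjk))
  · exact div_pos (sub_pos.2 ((strictMono_of_interlacing h1 h2 hkj).trans (h1 j)))
      (sub_pos.2 (strictMono_of_interlacing h1 h2 hkj))

section Determinant

variable {ι : Type*} [Fintype ι] [DecidableEq ι]

theorem det_diagonal_sub_vecMulVec_of_ne_zero {K : Type*} [Field K] {a : ι → K}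
    (ha : ∀ i, a i ≠ 0) (u v : ι → K) :
    det (diagonal a - vecMulVec u v) = ∏ i, a i - ∑ i, u i * v i * ∏ j ∈ univ.erase i, a j := by
  have hfactor : diagonal a - vecMulVec u v =
      diagonal a * (1 + vecMulVec (fun i => -u i / a i) v) := by
    ext i j
    simp only [Matrix.sub_apply, diagonal_mul, Matrix.add_apply, one_apply, diagonal_apply,
      vecMulVec_apply]
    split_ifs <;> field_simp [ha i] <;> ring
  rw [hfactor, det_mul, det_diagonal, vecMulVec_eq Unit,
    det_one_add_replicateCol_mul_replicateRow, dotProduct, mul_add, mul_one, mul_sum,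
    sub_eq_add_neg, ← sum_neg_distrib]
  congr 1
  refine sum_congr rfl fun i _ => ?_
  rw [← mul_prod_erase univ a (mem_univ i)]
  field_simp [ha i]

theorem det_diagonal_sub_vecMulVec (a u v : ι → ℝ) :
    det (diagonal a - vecMulVec u v) = ∏ i, a i - ∑ i, u i * v i * ∏ j ∈ univ.erase i, a j := by
  have hshift : (fun t : ℝ => det (diagonal (fun i => a i + t) - vecMulVec u v)) =
      fun t => ∏ i, (a i + t) - ∑ i, u i * v i * ∏ j ∈ univ.erase i, (a j + t) := by
    refine Continuous.ext_on ((Set.finite_range fun i => -a i).countable.dense_compl ℝ)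
      (by fun_prop) (by fun_prop) fun t ht =>
        det_diagonal_sub_vecMulVec_of_ne_zero (fun i h => ht ⟨i, ?_⟩) u v
    linarith
  simpa using congrFun hshift 0

end Determinant

theorem stmt10_general (N : ℕ) (d lam : Fin N → ℝ)
    (h1 : ∀ i, d i < lam i)
    (h2 : ∀ i : Fin N, ∀ h : i.val + 1 < N, lam i < d ⟨i.val + 1, h⟩)
    (uh : Fin N → ℝ)
    (huh : ∀ i, uh i = Real.sqrt
      ((∏ j ∈ Finset.univ.filter (fun j => j < i), (lam j - d i) / (d j - d i)) *
       (∏ j ∈ Finset.univ.filter (fun j => i < j), (lam j - d i) / (d j - d i)) *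
       (lam i - d i))) :
    ∀ x : ℝ,
      (x • (1 : Matrix (Fin N) (Fin N) ℝ) - Matrix.diagonal d - Matrix.vecMulVec uh uh).det =
        ∏ i, (x - lam i) := by
  have hweight : ∀ i, uh i * uh i = loewnerWeight d lam i := fun i => by
    rw [huh, prod_filter_lt_mul_prod_filter_gt (fun j => (lam j - d i) / (d j - d i))]
    exact Real.mul_self_sqrt (loewnerWeight_pos h1 h2 i).le
  intro x
  have hsecular := congrArg (eval x)
    (nodal_sub_sum_loewnerWeight (strictMono_of_interlacing h1 h2).injective lam)
  rw [smul_one_eq_diagonal, diagonal_sub, det_diagonal_sub_vecMulVec]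
  simpa [eval_nodal, eval_finsetSum, hweight] using hsecular

/-- Löwner's theorem: with `û` recomputed from the interlacing values via the
square-root product formula, the eigenvalues of `D + û ûᵀ` are exactly `λ̂_1, …, λ̂_N`,
i.e. `det(λI - D - û ûᵀ) = ∏ (λ - λ̂_i)`. -/
theorem stmt10 (N : ℕ) (hN : 0 < N) (d lam : Fin N → ℝ)
    (h1 : ∀ i, d i < lam i)
    (h2 : ∀ i : Fin N, ∀ h : i.val + 1 < N, lam i < d ⟨i.val + 1, h⟩)
    (uh : Fin N → ℝ)
    (huh : ∀ i, uh i = Real.sqrt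
      ((∏ j ∈ Finset.univ.filter (fun j => j < i), (lam j - d i) / (d j - d i)) *
       (∏ j ∈ Finset.univ.filter (fun j => i < j), (lam j - d i) / (d j - d i)) *
       (lam i - d i))) :
    ∀ x : ℝ,
      (x • (1 : Matrix (Fin N) (Fin N) ℝ) - Matrix.diagonal d - Matrix.vecMulVec uh uh).det =
        ∏ i, (x - lam i) :=
  stmt10_general N d lam h1 h2 uh huh
end

section
/- Let m, n, r be positive integers, let δ > 0 and Δ ≥ δ, let d_1, …, d_m and λ_1, …, λ_n be real numbers with δ ≤ d_i − λ_j ≤ Δ for all i, j, and let u ∈ ℝ^m, v ∈ ℝ^n. Suppose ω_1, …, ω_r and α_1, …, α_r are real numbers such that |1/x − ∑_{k=1}^r ω_k e^{−α_k x}| ≤ ε for every x ∈ [δ, Δ]. Define A ∈ ℝ^{m×r} by A_{ik} = u_i ω_k e^{−α_k d_i} and B ∈ ℝ^{n×r} by B_{jk} = v_j e^{α_k λ_j}. Then the Cauchy-like matrix C with entries C_{ij} = u_i v_j/(d_i − λ_j) satisfies |C_{ij} − (A Bᵀ)_{ij}| ≤ |u_i| |v_j| ε for all i, j; in particular C is within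 entrywise error |u_i||v_j| ε of the matrix A Bᵀ, whose rank is at most r. -/
/-!
Since `e^{-α (d - λ)} = e^{-α d} e^{α λ}`, the `(i, j)` entry of `A Bᵀ` is
`u_i v_j ∑ ω_k e^{-α_k (d_i - λ_j)}`, so `C_{ij} - (A Bᵀ)_{ij}` is `u_i v_j` times the error of the
exponential sum at `x = d_i - λ_j ∈ [δ, Δ]`. The rank bound holds because `A Bᵀ` factors
through `ℝ^r`.
-/

open Matrix BigOperators

lemma mul_transpose_apply_eq_sum_exp {ι κ ρ : Type*} [Fintype ρ]
    (u d : ι → ℝ) (v lam : κ → ℝ) (ω α : ρ → ℝ)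
    (A : Matrix ι ρ ℝ) (hA : ∀ i k, A i k = u i * ω k * Real.exp (-(α k) * d i))
    (B : Matrix κ ρ ℝ) (hB : ∀ j k, B j k = v j * Real.exp (α k * lam j)) (i : ι) (j : κ) :
    (A * Bᵀ) i j = u i * v j * ∑ k, ω k * Real.exp (-(α k) * (d i - lam j)) := by
  simp only [mul_apply, transpose_apply, hA, hB, Finset.mul_sum]
  refine Finset.sum_congr rfl fun k _ => ?_
  rw [show -α k * (d i - lam j) = -α k * d i + α k * lam j by ring, Real.exp_add]
  ring

lemma abs_mul_div_sub_mul_mul_le {a b x s ε : ℝ} (h : |1 / x - s| ≤ ε) :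
    |a * b / x - a * b * s| ≤ |a| * |b| * ε := by
  rw [← mul_one_div (a * b), ← mul_sub, abs_mul, abs_mul]
  gcongr

lemma rank_mul_transpose_le_card_width {ι κ ρ K : Type*} [Fintype κ] [Fintype ρ]
    [Field K] (A : Matrix ι ρ K) (B : Matrix κ ρ K) :
    (A * Bᵀ).rank ≤ Fintype.card ρ :=
  (rank_mul_le_left A Bᵀ).trans A.rank_le_card_width

theorem stmt13_general (m n r : ℕ)
    (δ Δ ε : ℝ)
    (d : Fin m → ℝ) (lam : Fin n → ℝ)
    (hdl : ∀ i j, δ ≤ d i - lam j ∧ d i - lam j ≤ Δ)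
    (u : Fin m → ℝ) (v : Fin n → ℝ)
    (ω α : Fin r → ℝ)
    (happrox : ∀ x ∈ Set.Icc δ Δ,
      |1 / x - ∑ k, ω k * Real.exp (-(α k) * x)| ≤ ε)
    (A : Matrix (Fin m) (Fin r) ℝ)
    (hA : ∀ i k, A i k = u i * ω k * Real.exp (-(α k) * d i))
    (B : Matrix (Fin n) (Fin r) ℝ)
    (hB : ∀ j k, B j k = v j * Real.exp (α k * lam j))
    (C : Matrix (Fin m) (Fin n) ℝ)
    (hC : ∀ i j, C i j = u i * v j / (d i - lam j)) :
    (∀ i j, |C i j - (A * Bᵀ) i j| ≤ |u i| * |v j| * ε) ∧ (A * Bᵀ).rank ≤ r := by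
  refine ⟨fun i j => ?_, ?_⟩
  · rw [hC, mul_transpose_apply_eq_sum_exp u d v lam ω α A hA B hB]
    exact abs_mul_div_sub_mul_mul_le (happrox _ (hdl i j))
  · simpa using rank_mul_transpose_le_card_width A B

/-- A sum-of-exponentials approximation of `1/x` on `[δ, Δ]` gives an entrywise
accurate rank-`r` approximation `A Bᵀ` of the Cauchy-like matrix
`C_{ij} = u_i v_j / (d_i - λ_j)`. -/
theorem stmt13 (m n r : ℕ) (hm : 0 < m) (hn : 0 < n) (hr : 0 < r)
    (δ Δ ε : ℝ) (hδ : 0 < δ) (hΔ : δ ≤ Δ)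
    (d : Fin m → ℝ) (lam : Fin n → ℝ)
    (hdl : ∀ i j, δ ≤ d i - lam j ∧ d i - lam j ≤ Δ)
    (u : Fin m → ℝ) (v : Fin n → ℝ)
    (ω α : Fin r → ℝ)
    (happrox : ∀ x ∈ Set.Icc δ Δ,
      |1 / x - ∑ k, ω k * Real.exp (-(α k) * x)| ≤ ε)
    (A : Matrix (Fin m) (Fin r) ℝ)
    (hA : ∀ i k, A i k = u i * ω k * Real.exp (-(α k) * d i))
    (B : Matrix (Fin n) (Fin r) ℝ)
    (hB : ∀ j k, B j k = v j * Real.exp (α k * lam j))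
    (C : Matrix (Fin m) (Fin n) ℝ)
    (hC : ∀ i j, C i j = u i * v j / (d i - lam j)) :
    (∀ i j, |C i j - (A * Bᵀ) i j| ≤ |u i| * |v j| * ε) ∧ (A * Bᵀ).rank ≤ r :=
  stmt13_general m n r δ Δ ε d lam hdl u v ω α happrox A hA B hB C hC
end

section
/- Let B be a real m×n matrix of rank r ≥ 1. Then there exist r column indices j_1, …, j_r (pairwise distinct) and a real r×n matrix X such that B = B_J X, where B_J is the m×r matrix whose k-th column is the j_k-th column of B, every entry of X satisfies |X_{kl}| ≤ 1, and the r×r submatrix of X formed by the columns j_1, …, j_r is the identity matrix. -/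
/-!
Take an `r × r` submatrix `A = B(I, J)` of maximal `|det|`; it is invertible because a matrix of
rank `r` has a nonzero `r × r` minor. Put `X = A⁻¹ B(I, :)`. Then `X(:, J) = A⁻¹ A = 1`, and by
Cramer's rule `X k l` is the quotient of the minor obtained from `A` by replacing its `k`-th column
with column `l` of `B`, by `det A`, so `|X k l| ≤ 1` by maximality. Since `A` is invertible, the
columns `B(:, J)` span the `r`-dimensional column space of `B`, so `B = B(:, J) Y`; restricting to
the rows `I` gives `B(I, :) = A Y`, i.e. `Y = X`.
-/

open Module Submodule in
theorem exists_linearIndependent_comp_of_finrank_span_eq {K V ι : Type*} [DivisionRing K]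
    [AddCommGroup V] [Module K V] [FiniteDimensional K V] {v : ι → V} {r : ℕ}
    (hr : finrank K (span K (Set.range v)) = r) :
    ∃ f : Fin r → ι, LinearIndependent K (v ∘ f) := by
  obtain ⟨κ, a, -, hspan, hli⟩ := exists_linearIndependent' K v
  have := hli.finite
  have := Fintype.ofFinite κ
  have e : Fin r ≃ κ :=
    (Fintype.equivFinOfCardEq (by rw [← hr, ← hspan, finrank_span_eq_card hli])).symm
  exact ⟨a ∘ e, hli.comp e e.injective⟩

namespace Matrix

variable {K m n ι : Type*}

theorem exists_submatrix_det_ne_zero [Field K] [Fintype m] [Fintype n] (B : Matrix m n K) :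
    ∃ (I : Fin B.rank → m) (J : Fin B.rank → n), (B.submatrix I J).det ≠ 0 := by
  obtain ⟨J, hJ⟩ :=
    exists_linearIndependent_comp_of_finrank_span_eq B.rank_eq_finrank_span_cols.symm
  have hC : (B.submatrix id J).rank = B.rank := by
    rw [← rank_transpose]
    exact (LinearIndependent.rank_matrix hJ).trans (Fintype.card_fin _)
  obtain ⟨I, hI⟩ := exists_linearIndependent_comp_of_finrank_span_eq
    ((B.submatrix id J).rank_eq_finrank_span_row.symm.trans hC)
  exact ⟨I, J, ((isUnit_iff_isUnit_det _).mp (linearIndependent_rows_iff_isUnit.mp hI)).ne_zero⟩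

theorem exists_submatrix_det_ne_zero_forall_abs_det_le [Field K] [LinearOrder K]
    [IsStrictOrderedRing K] [Fintype m] [Fintype n] (B : Matrix m n K) :
    ∃ (I : Fin B.rank → m) (J : Fin B.rank → n), (B.submatrix I J).det ≠ 0 ∧
      ∀ (I' : Fin B.rank → m) (J' : Fin B.rank → n),
        |(B.submatrix I' J').det| ≤ |(B.submatrix I J).det| := by
  obtain ⟨I₀, J₀, h₀⟩ := B.exists_submatrix_det_ne_zero
  have : Nonempty ((Fin B.rank → m) × (Fin B.rank → n)) := ⟨(I₀, J₀)⟩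
  obtain ⟨⟨I, J⟩, hmax⟩ :=
    Finite.exists_max fun p : (Fin B.rank → m) × (Fin B.rank → n) => |(B.submatrix p.1 p.2).det|
  refine ⟨I, J, fun h => h₀ ?_, fun I' J' => hmax (I', J')⟩
  simpa [h] using hmax (I₀, J₀)

theorem injective_of_det_submatrix_ne_zero [CommRing K] [Fintype ι] [DecidableEq ι]
    (B : Matrix m n K) {I : ι → m} {J : ι → n} (hA : (B.submatrix I J).det ≠ 0) :
    Function.Injective J := by
  intro k₁ k₂ h
  by_contra hne
  exact hA (det_zero_of_column_eq hne fun i => by simp [h])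

theorem exists_mul_eq_of_range_mulVecLin_le [CommSemiring K] [Fintype ι] [Fintype n]
    {C : Matrix m ι K} {B : Matrix m n K}
    (h : LinearMap.range B.mulVecLin ≤ LinearMap.range C.mulVecLin) :
    ∃ Y : Matrix ι n K, C * Y = B := by
  have hcol (l : n) : B.col l ∈ LinearMap.range C.mulVecLin :=
    h (range_mulVecLin B ▸ Submodule.subset_span ⟨l, rfl⟩)
  choose y hy using hcol
  refine ⟨of fun k l => y l k, ?_⟩
  ext i l
  exact congrFun (hy l) i

theorem range_mulVecLin_submatrix_le [CommSemiring K] [Fintype n] [Fintype ι] (B : Matrix m n K)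
    (J : ι → n) :
    LinearMap.range (B.submatrix id J).mulVecLin ≤ LinearMap.range B.mulVecLin := by
  rw [range_mulVecLin, range_mulVecLin]
  exact Submodule.span_mono (Set.range_comp_subset_range J B.col)

theorem submatrix_mul_inv_mul_submatrix_eq [Field K] [Fintype m] [Fintype n] [Fintype ι]
    [DecidableEq ι] (B : Matrix m n K) {I : ι → m} {J : ι → n} (hB : B.rank ≤ Fintype.card ι)
    (hA : (B.submatrix I J).det ≠ 0) :
    B.submatrix id J * ((B.submatrix I J)⁻¹ * B.submatrix I id) = B := by
  have hrange : LinearMap.range (B.submatrix id J).mulVecLin = LinearMap.range B.mulVecLin := by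
    refine Submodule.eq_of_le_of_finrank_le (B.range_mulVecLin_submatrix_le J) ?_
    calc B.rank ≤ Fintype.card ι := hB
      _ = ((B.submatrix id J).submatrix I id).rank := (rank_of_det_ne_zero hA).symm
      _ ≤ (B.submatrix id J).rank := rank_submatrix_le _ _ _
  obtain ⟨Y, hY⟩ := exists_mul_eq_of_range_mulVecLin_le hrange.ge
  have hrows : B.submatrix I id = B.submatrix I J * Y := by
    conv_lhs => rw [← hY]
    exact submatrix_mul _ _ _ id _ Function.bijective_id
  rw [hrows, nonsing_inv_mul_cancel_left _ _ (isUnit_iff_ne_zero.mpr hA), hY]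

theorem inv_mul_submatrix_apply_self [Field K] [Fintype ι] [DecidableEq ι] (B : Matrix m n K)
    {I : ι → m} {J : ι → n} (hA : (B.submatrix I J).det ≠ 0) (k l : ι) :
    ((B.submatrix I J)⁻¹ * B.submatrix I id) k (J l) = (1 : Matrix ι ι K) k l := by
  rw [← nonsing_inv_mul _ (isUnit_iff_ne_zero.mpr hA)]
  rfl

theorem updateCol_submatrix_eq_submatrix_update [DecidableEq ι] (B : Matrix m n K) (I : ι → m)
    (J : ι → n) (k : ι) (l : n) :
    (B.submatrix I J).updateCol k (fun i => B (I i) l) = B.submatrix I (Function.update J k l) := by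
  ext i j
  by_cases h : j = k <;> simp [h]

theorem abs_inv_mul_submatrix_apply_le_one [Field K] [LinearOrder K] [IsStrictOrderedRing K]
    [Fintype ι] [DecidableEq ι] (B : Matrix m n K) {I : ι → m} {J : ι → n}
    (hA : (B.submatrix I J).det ≠ 0)
    (hmax : ∀ J' : ι → n, |(B.submatrix I J').det| ≤ |(B.submatrix I J).det|)
    (k : ι) (l : n) :
    |((B.submatrix I J)⁻¹ * B.submatrix I id) k l| ≤ 1 := by
  have hcramer : (B.submatrix I J).det * ((B.submatrix I J)⁻¹ * B.submatrix I id) k l =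
      (B.submatrix I (Function.update J k l)).det := by
    rw [← updateCol_submatrix_eq_submatrix_update, ← cramer_apply,
      ← det_smul_inv_mulVec_eq_cramer _ _ (isUnit_iff_ne_zero.mpr hA)]
    rfl
  have := hmax (Function.update J k l)
  rw [← hcramer, abs_mul] at this
  exact le_of_mul_le_mul_left (by simpa using this) (abs_pos.mpr hA)

end Matrix

theorem stmt16_general (m n r : ℕ)
    (B : Matrix (Fin m) (Fin n) ℝ) (hrank : B.rank = r) :
    ∃ j : Fin r → Fin n, Function.Injective j ∧
      ∃ X : Matrix (Fin r) (Fin n) ℝ,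
        B = B.submatrix id j * X ∧
        (∀ k l, |X k l| ≤ 1) ∧
        (∀ k l : Fin r, X k (j l) = if k = l then 1 else 0) := by
  subst hrank
  obtain ⟨I, J, hA, hmax⟩ := B.exists_submatrix_det_ne_zero_forall_abs_det_le
  refine ⟨J, B.injective_of_det_submatrix_ne_zero hA, (B.submatrix I J)⁻¹ * B.submatrix I id,
    (B.submatrix_mul_inv_mul_submatrix_eq (Fintype.card_fin _).ge hA).symm,
    B.abs_inv_mul_submatrix_apply_le_one hA (hmax I), fun k l => ?_⟩
  rw [B.inv_mul_submatrix_apply_self hA, Matrix.one_apply]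

/-- Existence of an exact interpolative decomposition: a rank-`r` matrix `B`
equals `B(:, J) X` where `J` selects `r` distinct columns of `B`, all entries of
`X` are at most `1` in magnitude, and the columns of `X` indexed by `J` form the
`r × r` identity matrix. -/
theorem stmt16 (m n r : ℕ) (hr : 1 ≤ r)
    (B : Matrix (Fin m) (Fin n) ℝ) (hrank : B.rank = r) :
    ∃ j : Fin r → Fin n, Function.Injective j ∧
      ∃ X : Matrix (Fin r) (Fin n) ℝ,
        B = B.submatrix id j * X ∧
        (∀ k l, |X k l| ≤ 1) ∧
        (∀ k l : Fin r, X k (j l) = if k = l then 1 else 0) :=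
  stmt16_general m n r B hrank
end
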